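/- Let n be finite and let X_k be a compact Hausdorff space for each k ≤ n. (1) If X_n is not scattered and X_k is not metrizable for each k < n, then ∏_{k≤n} X_k is not 2^n-dissipated. (2) If X_k is a compact non-metrizable Hausdorff space for every k < ω, then ∏_{k<ω} X_k is not weakly c-dissipated. -/

import Mathlib

open Set Topology

universe u

section Defs

variable {X Y K Z : Type*}

/-- A subset `S` of a topological space is *scattered* iff every nonempty subset `T ⊆ S`
has a point which is isolated in the subspace topology of `T`. -/
def IsScatteredSet [TopologicalSpace X] (S : Set X) : Prop :=
  ∀ T ⊆ S, T.Nonempty → ∃ x ∈ T, ∃ U : Set X, IsOpen U ∧ U ∩ T = {x}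

/-- A *loose family* for `f : X → Y` : a pairwise disjoint family `Ps` of closed subsets of `X`
such that for some non-scattered `Q ⊆ Y`, `f '' P = Q` for all `P ∈ Ps`. -/
def LooseFamily [TopologicalSpace X] [TopologicalSpace Y] (f : X → Y)
    (Ps : Set (Set X)) : Prop :=
  Ps.Pairwise Disjoint ∧ (∀ P ∈ Ps, IsClosed P) ∧
    ∃ Q : Set Y, ¬ IsScatteredSet Q ∧ ∀ P ∈ Ps, f '' P = Q

/-- `f` is `κ`-*tight* iff there is no loose family for `f` of cardinality `κ`. -/
def IsTightCard [TopologicalSpace X] [TopologicalSpace Y] (κ : Cardinal) (f : X → Y) : Prop :=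
  ¬ ∃ Ps : Set (Set X), LooseFamily f Ps ∧ Cardinal.mk Ps = κ

/-- `f` is *tight* iff it is `2`-tight. -/
def IsTight [TopologicalSpace X] [TopologicalSpace Y] (f : X → Y) : Prop :=
  IsTightCard 2 f

/-- A `K`-*loose function* for `f : X → Y` : a continuous `φ : D → K` with `D` closed in `X`,
such that for some non-scattered `Q ⊆ Y`, `φ(f⁻¹{y} ∩ D) = K` for all `y ∈ Q`. -/
def LooseFunction [TopologicalSpace X] [TopologicalSpace Y] [TopologicalSpace K]
    (f : X → Y) (D : Set X) (φ : X → K) : Prop :=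
  IsClosed D ∧ ContinuousOn φ D ∧
    ∃ Q : Set Y, ¬ IsScatteredSet Q ∧ ∀ y ∈ Q, φ '' (f ⁻¹' {y} ∩ D) = Set.univ

/-- `f` is *weakly c-tight* iff there is no `K`-loose function for `f`
with `K` the Cantor space `2^ω`. -/
def WeaklyCTight [TopologicalSpace X] [TopologicalSpace Y] (f : X → Y) : Prop :=
  ¬ ∃ (D : Set X) (φ : X → (ℕ → Bool)), LooseFunction f D φ

/-- `f` is *finer* than `g` iff `f x₁ = f x₂` implies `g x₁ = g x₂`. -/
def Finer (f : X → Y) (g : X → Z) : Prop :=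
  ∀ x₁ x₂ : X, f x₁ = f x₂ → g x₁ = g x₂

end Defs

/-- `X` is `κ`-*dissipated* iff every continuous map from `X` to a compact metrizable
space is refined by a `κ`-tight continuous map from `X` to a compact metrizable space. -/
def IsDissipatedCard (κ : Cardinal.{u}) (X : Type u) [TopologicalSpace X] : Prop :=
  ∀ (Z : Type u) [TopologicalSpace Z] [CompactSpace Z] [TopologicalSpace.MetrizableSpace Z],
    ∀ g : X → Z, Continuous g →
      ∃ (Y : Type u) (tY : TopologicalSpace Y),
        @CompactSpace Y tY ∧ @TopologicalSpace.MetrizableSpace Y tY ∧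
        ∃ f : X → Y, @Continuous X Y _ tY f ∧ @IsTightCard X Y _ tY κ f ∧ Finer f g

/-- `X` is *weakly c-dissipated* iff every continuous map from `X` to a compact metrizable
space is refined by a weakly c-tight continuous map from `X` to a compact metrizable space. -/
def IsWeaklyCDissipated (X : Type u) [TopologicalSpace X] : Prop :=
  ∀ (Z : Type u) [TopologicalSpace Z] [CompactSpace Z] [TopologicalSpace.MetrizableSpace Z],
    ∀ g : X → Z, Continuous g →
      ∃ (Y : Type u) (tY : TopologicalSpace Y),
        @CompactSpace Y tY ∧ @TopologicalSpace.MetrizableSpace Y tY ∧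
        ∃ f : X → Y, @Continuous X Y _ tY f ∧ @WeaklyCTight X Y _ tY f ∧ Finer f g

/-!
A continuous map `f` from a product of compact spaces to a metrizable space cannot be injective
in a non-metrizable compact coordinate `X_k`: curried, it would embed `X_k` into the metrizable
space `C(∏_{j ≠ k} X_j, Y)`. So there are `a_k ≠ b_k` in `X_k` which `f` never tells apart,
whatever the other coordinates are, and by continuity of `f` this survives switching infinitely
many coordinates at once.

In (1) the `2^n` ways of choosing `a_k` or `b_k` for every `k < n` give `2^n` disjoint closed
copies of `X_n` with one common image under `f`. That image is uncountable because `f` refines a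
map that is injective on a Cantor set built inside the perfect kernel of `X_n`. In (2) switching
the even coordinates between `a_k` and `b_k` maps every fibre of `f` onto `2^ω`, and letting the
odd coordinates run through two separated points makes the common image uncountable. By
Cantor–Bendixson, an uncountable compact subset of a compact metrizable space is not scattered.
-/

open Function TopologicalSpace Filter

section Scattered

variable {X : Type*} [TopologicalSpace X]

theorem not_isScatteredSet_iff {S : Set X} :
    ¬ IsScatteredSet S ↔ ∃ T ⊆ S, T.Nonempty ∧ Preperfect T := by
  simp only [IsScatteredSet, not_forall, not_exists, not_and, exists_prop, preperfect_iff_nhds]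
  refine exists_congr fun T => and_congr_right fun _ => and_congr_right fun _ =>
    forall₂_congr fun x hx => ⟨fun h U hU => ?_, fun h U hU hUT => ?_⟩
  · obtain ⟨V, hVU, hV, hxV⟩ := mem_nhds_iff.1 hU
    by_contra! hsub
    exact h V hV <| Subset.antisymm (fun y hy => hsub y ⟨hVU hy.1, hy.2⟩)
      (singleton_subset_iff.2 ⟨hxV, hx⟩)
  · have hxU : x ∈ U := (hUT.symm ▸ rfl : x ∈ U ∩ T).1
    obtain ⟨y, hy, hyx⟩ := h U (hU.mem_nhds hxU)
    rw [hUT] at hy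
    exact hyx hy

theorem not_isScatteredSet_of_isClosed_of_not_countable [SecondCountableTopology X] {C : Set X}
    (hC : IsClosed C) (hunc : ¬ C.Countable) : ¬ IsScatteredSet C := by
  obtain ⟨D, hD, hDne, hDC⟩ := exists_perfect_nonempty_of_isClosed_of_not_countable hC hunc
  exact not_isScatteredSet_iff.2 ⟨D, hDC, hDne, hD.acc⟩

end Scattered

section CantorScheme

theorem not_countable_range_of_injective {β : Type*} {v : (ℕ → Bool) → β} (hv : Injective v) :
    ¬ (range v).Countable := fun h => by
  have hcard : Cardinal.mk (ℕ → Bool) = Cardinal.continuum := by simp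
  have := h.to_subtype
  have hcount : Countable (ℕ → Bool) := (rangeFactorization_injective.2 hv).countable
  exact (Cardinal.mk_le_aleph0_iff.2 hcount).not_gt (hcard ▸ Cardinal.aleph0_lt_continuum)

theorem injective_of_apply_map_range_eq {β : Type*} {F : (ℕ → Bool) → List Bool → β}
    (c : Bool → β) (hc : Injective c) (hF : ∀ σ m, F σ ((List.range m).map σ) = c (σ m)) :
    Injective F := by
  intro σ τ hστ
  funext m
  induction m using Nat.strong_induction_on with
  | _ m ih =>
    have hpre : (List.range m).map σ = (List.range m).map τ :=
      List.map_congr_left fun j hj => ih j (List.mem_range.1 hj)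
    apply hc
    rw [← hF, ← hF, hστ, hpre]

variable {A : Type*} [TopologicalSpace A] [CompactSpace A]

theorem exists_forall_mem_map_range (T : List Bool → Set A) (hT : ∀ s, IsClosed (T s))
    (hne : ∀ s, (T s).Nonempty) (hmono : ∀ s b, T (s ++ [b]) ⊆ T s) (σ : ℕ → Bool) :
    ∃ x, ∀ m, x ∈ T ((List.range m).map σ) := by
  obtain ⟨x, hx⟩ := IsCompact.nonempty_iInter_of_sequence_nonempty_isCompact_isClosed
    (fun m => T ((List.range m).map σ))
    (fun m => by simpa only [List.range_succ, List.map_append,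
      List.map_cons, List.map_nil] using hmono _ (σ m))
    (fun m => hne _) (hT _).isCompact (fun m => hT _)
  exact ⟨x, mem_iInter.1 hx⟩

theorem Perfect.exists_continuous_not_countable_range [T2Space A] {C : Set A} (hC : Perfect C)
    (hne : C.Nonempty) :
    ∃ h : A → (List Bool → unitInterval), Continuous h ∧ ¬ (range h).Countable := by
  let N := {P : Set A // Perfect P ∧ P.Nonempty}
  have hsplit (P : N) : ∃ Q : Bool → N, (∀ b, (Q b).1 ⊆ P.1) ∧ Disjoint (Q false).1 (Q true).1 := by
    obtain ⟨C₀, C₁, ⟨h₀, hne₀, hsub₀⟩, ⟨h₁, hne₁, hsub₁⟩, hdisj⟩ := P.2.1.splitting P.2.2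
    refine ⟨fun b => if b then ⟨C₁, h₁, hne₁⟩ else ⟨C₀, h₀, hne₀⟩, fun b => ?_, hdisj⟩
    cases b <;> assumption
  choose split hsub hdisj using hsplit
  let tree (s : List Bool) : N := s.foldl split ⟨C, hC, hne⟩
  have hsep (s : List Bool) : ∃ u : A → unitInterval, Continuous u ∧
      EqOn u 0 (split (tree s) false).1 ∧ EqOn u 1 (split (tree s) true).1 := by
    obtain ⟨u, hu0, hu1, hu⟩ := exists_continuous_zero_one_of_isClosed
      (split (tree s) false).2.1.closed (split (tree s) true).2.1.closed (hdisj (tree s))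
    exact ⟨fun x => ⟨u x, hu x⟩, u.continuous.subtype_mk _, fun x hx => Subtype.ext (hu0 hx),
      fun x hx => Subtype.ext (hu1 hx)⟩
  choose u hu hu0 hu1 using hsep
  choose pt hpt using exists_forall_mem_map_range (fun s => (tree s).1)
    (fun s => (tree s).2.1.closed) (fun s => (tree s).2.2)
    (fun s b => by simpa only [tree, List.foldl_concat] using hsub (tree s) b)
  have hval (σ : ℕ → Bool) (m : ℕ) :
      u ((List.range m).map σ) (pt σ) = if σ m then 1 else 0 := by
    have h := hpt σ (m + 1)
    simp only [tree, List.range_succ, List.map_append, List.map_cons, List.map_nil,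
      List.foldl_concat] at h
    cases hσ : σ m
    · simpa using hu0 _ (hσ ▸ h)
    · simpa using hu1 _ (hσ ▸ h)
  refine ⟨fun x s => u s x, continuous_pi hu, fun hc => not_countable_range_of_injective
    (v := fun σ s => u s (pt σ)) ?_ (hc.mono (range_comp_subset_range pt fun x s => u s x))⟩
  refine injective_of_apply_map_range_eq (fun b => if b then 1 else 0) (fun b b' => ?_) hval
  cases b <;> cases b' <;> simp

end CantorScheme

theorem exists_ne_forall_eq_of_not_metrizableSpace {A B Y : Type*} [TopologicalSpace A]
    [CompactSpace A] [TopologicalSpace B] [CompactSpace B] [TopologicalSpace Y]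
    [MetrizableSpace Y] (hA : ¬ MetrizableSpace A) {F : A × B → Y} (hF : Continuous F) :
    ∃ a a' : A, a ≠ a' ∧ ∀ y, F (a, y) = F (a', y) := by
  by_contra! h
  let G : C(A, C(B, Y)) := ContinuousMap.curry ⟨F, hF⟩
  have hG : Injective G := fun a a' hGa => by
    by_contra hne
    obtain ⟨y, hy⟩ := h a a' hne
    exact hy (DFunLike.congr_fun hGa y)
  exact hA (G.continuous.isClosedEmbedding hG).isEmbedding.metrizableSpace

section Swaps

variable {ι : Type*} [DecidableEq ι] {X : ι → Type*} {Y : Type*}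

theorem exists_ne_forall_update_eq [∀ i, TopologicalSpace (X i)] [∀ i, CompactSpace (X i)]
    [TopologicalSpace Y] [MetrizableSpace Y] {f : (∀ i, X i) → Y} (hf : Continuous f) {i : ι}
    (hi : ¬ MetrizableSpace (X i)) :
    ∃ a b : X i, a ≠ b ∧ ∀ x, f (update x i a) = f (update x i b) := by
  let e := Homeomorph.piSplitAt i X
  obtain ⟨a, b, hab, h⟩ := exists_ne_forall_eq_of_not_metrizableSpace hi
    (hf.comp e.symm.continuous)
  refine ⟨a, b, hab, fun x => ?_⟩
  have he (c : X i) : e.symm (c, fun j => x j) = update x i c := by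
    funext j
    rcases eq_or_ne j i with rfl | hj
    · simp [e]
    · simp [e, hj]
  simpa only [comp_apply, he] using h fun j => x j

theorem forall_update_eq_of_mem_pair {f : (∀ i, X i) → Y} {i : ι} {a b u v : X i}
    (hab : ∀ x, f (update x i a) = f (update x i b)) (hu : u ∈ ({a, b} : Set (X i)))
    (hv : v ∈ ({a, b} : Set (X i))) (x : ∀ i, X i) : f (update x i u) = f (update x i v) := by
  rcases hu with rfl | rfl <;> rcases hv with rfl | rfl <;> simp [hab]

theorem apply_piecewise_eq_of_forall_update_eq {f : (∀ i, X i) → Y} {x y : ∀ i, X i}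
    (h : ∀ i w, f (update w i (x i)) = f (update w i (y i))) (s : Finset ι) :
    f (s.piecewise y x) = f x := by
  induction s using Finset.induction_on with
  | empty => simp
  | insert i s hi ih =>
    rw [Finset.piecewise_insert, ← h, ← Finset.piecewise_eq_of_notMem s y x hi, update_eq_self,
      ih]

theorem eq_of_forall_update_eq [∀ i, TopologicalSpace (X i)] [TopologicalSpace Y] [T2Space Y]
    {f : (∀ i, X i) → Y} (hf : Continuous f) {x y : ∀ i, X i}
    (h : ∀ i w, f (update w i (x i)) = f (update w i (y i))) : f x = f y := by
  have hlim : Tendsto (fun s : Finset ι => s.piecewise y x) atTop (𝓝 y) :=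
    tendsto_pi_nhds.2 fun i => tendsto_nhds_of_eventually_eq <| (eventually_ge_atTop {i}).mono
      fun s hs => s.piecewise_eq_of_mem y x (hs (Finset.mem_singleton_self i))
  exact tendsto_nhds_unique
    (tendsto_const_nhds.congr fun s => (apply_piecewise_eq_of_forall_update_eq h s).symm)
    ((hf.tendsto y).comp hlim)

end Swaps

theorem Finer.countable_image {X Y Z : Type*} {f : X → Y} {g : X → Z} (hfg : Finer f g)
    {S : Set X} (hS : (f '' S).Countable) : (g '' S).Countable := by
  rcases S.eq_empty_or_nonempty with rfl | ⟨x₀, -⟩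
  · simp
  have : Nonempty X := ⟨x₀⟩
  refine (hS.image fun y => g (invFunOn f S y)).mono ?_
  rintro _ ⟨x, hx, rfl⟩
  exact ⟨f x, mem_image_of_mem f hx,
    hfg _ _ (invFunOn_eq (f := f) ⟨x, hx, rfl⟩)⟩

theorem Finer.not_isScatteredSet_image {X Y Z : Type*} [TopologicalSpace X] [CompactSpace X]
    [TopologicalSpace Y] [T2Space Y] [SecondCountableTopology Y] {f : X → Y} {g : X → Z}
    (hfg : Finer f g) (hf : Continuous f) {S : Set X} (hS : IsClosed S)
    (hg : ¬ (g '' S).Countable) : ¬ IsScatteredSet (f '' S) :=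
  not_isScatteredSet_of_isClosed_of_not_countable (hS.isCompact.image hf).isClosed
    fun h => hg (hfg.countable_image h)

section SelectSnoc

variable {n : ℕ} {X : Fin (n + 1) → Type*}

def selectSnoc (a b : ∀ k : Fin n, X k.castSucc) (s : Fin n → Bool) :
    X (Fin.last n) → ∀ k, X k :=
  Fin.snoc fun k => if s k then b k else a k

variable {a b : ∀ k : Fin n, X k.castSucc}

theorem continuous_selectSnoc [∀ k, TopologicalSpace (X k)] (s : Fin n → Bool) :
    Continuous (selectSnoc a b s) :=
  continuous_const.finSnoc continuous_id

@[simp]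
theorem selectSnoc_last (s : Fin n → Bool) (z : X (Fin.last n)) :
    selectSnoc a b s z (Fin.last n) = z :=
  Fin.snoc_last _ _

theorem eq_of_selectSnoc_eq (hab : ∀ k, a k ≠ b k) {s t : Fin n → Bool} {z z' : X (Fin.last n)}
    (h : selectSnoc a b s z = selectSnoc a b t z') : s = t := by
  funext k
  have := congrFun h k.castSucc
  simp only [selectSnoc, Fin.snoc_castSucc] at this
  revert this
  cases s k <;> cases t k <;> simp [hab k, (hab k).symm]

theorem comp_selectSnoc_eq [∀ k, TopologicalSpace (X k)] {Y : Type*} [TopologicalSpace Y]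
    [T2Space Y] {f : (∀ k, X k) → Y} (hf : Continuous f)
    (hswap : ∀ k x, f (update x k.castSucc (a k)) = f (update x k.castSucc (b k)))
    (s t : Fin n → Bool) : f ∘ selectSnoc a b s = f ∘ selectSnoc a b t := by
  funext z
  refine eq_of_forall_update_eq hf fun i w => ?_
  induction i using Fin.lastCases with
  | last => simp
  | cast k =>
    simp only [selectSnoc, Fin.snoc_castSucc]
    exact forall_update_eq_of_mem_pair (hswap k) (by split_ifs <;> simp) (by split_ifs <;> simp) w

end SelectSnoc

theorem not_isDissipatedCard_pi_fin {n : ℕ} {X : Fin (n + 1) → Type}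
    [∀ k, TopologicalSpace (X k)] [∀ k, CompactSpace (X k)] [∀ k, T2Space (X k)]
    (hlast : ¬ IsScatteredSet (univ : Set (X (Fin.last n))))
    (hnm : ∀ k : Fin n, ¬ MetrizableSpace (X k.castSucc)) :
    ¬ IsDissipatedCard ((2 ^ n : ℕ) : Cardinal.{0}) (∀ k, X k) := by
  intro hdiss
  obtain ⟨T, -, ⟨z₀, hz₀⟩, hT⟩ := not_isScatteredSet_iff.1 hlast
  obtain ⟨h, hh, hhr⟩ :=
    hT.perfect_closure.exists_continuous_not_countable_range ⟨z₀, subset_closure hz₀⟩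
  obtain ⟨Y, tY, hYc, hYm, f, hf, htight, hfg⟩ :=
    hdiss _ (fun x => h (x (Fin.last n))) (hh.comp (continuous_apply _))
  choose a b hab hswap using fun k : Fin n => exists_ne_forall_update_eq hf (hnm k)
  let P (s : Fin n → Bool) := range (selectSnoc a b s)
  have hPinj : Injective P := fun s t hst => by
    obtain ⟨z, hz⟩ : selectSnoc a b s z₀ ∈ P t := hst ▸ mem_range_self z₀
    exact (eq_of_selectSnoc_eq hab hz).symm
  let s₀ : Fin n → Bool := fun _ => false
  refine htight ⟨range P, ⟨?_, ?_, f '' P s₀, ?_, ?_⟩, ?_⟩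
  · exact Pairwise.range_pairwise fun s t hst =>
      disjoint_range_iff.2 fun z z' h => hst (eq_of_selectSnoc_eq hab h)
  · rintro _ ⟨s, rfl⟩
    exact (isCompact_range (continuous_selectSnoc s)).isClosed
  · refine hfg.not_isScatteredSet_image hf (isCompact_range (continuous_selectSnoc s₀)).isClosed ?_
    rwa [← range_comp, show (fun x => h (x (Fin.last n))) ∘ selectSnoc a b s₀ = h from
      funext fun z => by simp]
  · rintro _ ⟨s, rfl⟩
    rw [← range_comp, ← range_comp, comp_selectSnoc_eq hf hswap]
  · rw [Cardinal.mk_range_eq _ hPinj]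
    simp

theorem looseFunction_of_update_eq {X : ℕ → Type*} [∀ k, TopologicalSpace (X k)]
    [∀ k, T1Space (X k)] [∀ k, DecidableEq (X k)] {Y : Type*} [TopologicalSpace Y] [T2Space Y]
    {f : (∀ k, X k) → Y}
    (hf : Continuous f) {a b : ∀ k, X k} (hab : ∀ m, a (2 * m) ≠ b (2 * m))
    (hswap : ∀ m x, f (update x (2 * m) (a (2 * m))) = f (update x (2 * m) (b (2 * m))))
    (hQ : ¬ IsScatteredSet (f '' {k | Even k}.pi fun k => {a k, b k})) :
    LooseFunction f ({k | Even k}.pi fun k => {a k, b k})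
      (fun x m => decide (x (2 * m) = b (2 * m))) := by
  refine ⟨isClosed_set_pi fun k _ => (toFinite _).isClosed, continuousOn_pi.2 fun m => ?_, _, hQ,
    ?_⟩
  · have : ContinuousOn (fun z => decide (z = b (2 * m))) {a (2 * m), b (2 * m)} :=
      continuousOn_iff_continuous_domRestrict.2 continuous_of_discreteTopology
    exact this.comp (continuous_apply _).continuousOn fun x hx => hx (2 * m) (even_two_mul m)
  rintro _ ⟨x, hx, rfl⟩
  refine eq_univ_of_forall fun σ => ⟨fun k => if Even k then (if σ (k / 2) then b k else a k)
    else x k, ⟨?_, fun k (hk : Even k) => ?_⟩, funext fun m => ?_⟩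
  · refine eq_of_forall_update_eq hf fun k w => ?_
    by_cases hk : Even k
    · obtain ⟨m, rfl⟩ := hk.two_dvd
      simp only [even_two_mul, if_true]
      exact forall_update_eq_of_mem_pair (hswap m) (by split_ifs <;> simp) (hx _ (even_two_mul m)) w
    · simp only [hk, if_false]
  · simp only [hk, if_true]
    split_ifs <;> simp
  · simp only [even_two_mul, if_true, Nat.mul_div_cancel_left m two_pos]
    cases σ m <;> simp [hab m]

theorem not_isWeaklyCDissipated_pi_nat {X : ℕ → Type} [∀ k, TopologicalSpace (X k)]
    [∀ k, CompactSpace (X k)] [∀ k, T2Space (X k)] (hnm : ∀ k, ¬ MetrizableSpace (X k)) :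
    ¬ IsWeaklyCDissipated (∀ k, X k) := by
  intro hdiss
  have (k : ℕ) : Nontrivial (X k) := by
    by_contra h
    rw [not_nontrivial_iff_subsingleton] at h
    exact hnm k inferInstance
  choose p q hpq using fun k => exists_pair_ne (X k)
  choose u hu hu0 hu1 using fun k => CompletelyRegularSpace.completely_regular (p k) {q k}
    isClosed_singleton (by simpa using hpq k)
  let g (x : ∀ k, X k) (m : ℕ) : unitInterval := u (2 * m + 1) (x (2 * m + 1))
  obtain ⟨Y, tY, hYc, hYm, f, hf, htight, hfg⟩ :=
    hdiss _ g (continuous_pi fun m => (hu _).comp (continuous_apply _))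
  choose a b hab hswap using fun k => exists_ne_forall_update_eq hf (hnm k)
  classical
  refine htight ⟨_, _, looseFunction_of_update_eq hf (fun m => hab _) (fun m => hswap _) ?_⟩
  let v (τ : ℕ → Bool) (k : ℕ) : X k := if Even k then a k else if τ (k / 2) then q k else p k
  have hgv (τ : ℕ → Bool) (m : ℕ) : g (v τ) m = if τ m then 1 else 0 := by
    have hodd : ¬ Even (2 * m + 1) := Nat.not_even_iff_odd.2 (odd_two_mul_add_one m)
    have hdiv : (2 * m + 1) / 2 = m := by omega
    simp only [g, v, hodd, hdiv, if_false]
    cases τ m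
    · simpa using hu0 (2 * m + 1)
    · simpa using hu1 (2 * m + 1) rfl
  have hv : Injective (g ∘ v) := fun τ τ' h => funext fun m => by
    have := congrFun h m
    simp only [comp_apply, hgv] at this
    revert this
    cases τ m <;> cases τ' m <;> simp
  refine hfg.not_isScatteredSet_image hf (isClosed_set_pi fun k _ => (toFinite _).isClosed)
    fun hc => not_countable_range_of_injective hv (hc.mono ?_)
  rintro _ ⟨τ, rfl⟩
  exact ⟨v τ, fun k (hk : Even k) => by simp [v, hk], rfl⟩

/-- (1) If `X_k` (k ≤ n) are compact Hausdorff, `X_n` is not scattered and `X_k` is not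
metrizable for `k < n`, then `∏_{k≤n} X_k` is not `2^n`-dissipated.
(2) If `X_k` (k < ω) are compact Hausdorff non-metrizable, then `∏_{k<ω} X_k` is not
weakly c-dissipated. -/
theorem stmt12 :
    (∀ (n : ℕ) (X : Fin (n + 1) → Type)
      [∀ k, TopologicalSpace (X k)] [∀ k, CompactSpace (X k)] [∀ k, T2Space (X k)],
      ¬ IsScatteredSet (Set.univ : Set (X (Fin.last n))) →
      (∀ k : Fin n, ¬ TopologicalSpace.MetrizableSpace (X k.castSucc)) →
      ¬ IsDissipatedCard ((2 ^ n : ℕ) : Cardinal.{0}) (∀ k, X k)) ∧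
    (∀ (X : ℕ → Type)
      [∀ k, TopologicalSpace (X k)] [∀ k, CompactSpace (X k)] [∀ k, T2Space (X k)],
      (∀ k, ¬ TopologicalSpace.MetrizableSpace (X k)) →
      ¬ IsWeaklyCDissipated (∀ k, X k)) :=
  ⟨fun _ _ _ _ _ => not_isDissipatedCard_pi_fin, fun _ _ _ _ => not_isWeaklyCDissipated_pi_nat⟩
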